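/- There exists a universal constant C > 0 such that for every hypergraph G = (V, E) with V finite and E a finite set of subsets of V, and every natural number s with 1 ≤ s ≤ |V| and |⋃_{e∈E} e| ≥ s, we have IntCover(G, s) ≤ 3.73 · FracCover(G, s) + C · (1 + log s). -/

import Mathlib

/-- `FracCover G s`: the infimum of `∑_{e ∈ E} x e` over all nonnegative `x` with
`∑_{v ∈ V} min 1 (∑_{e ∋ v} x e) ≥ s`. -/
noncomputable def FracCover {V : Type*} [Fintype V] [DecidableEq V]
    (E : Finset (Finset V)) (s : ℕ) : ℝ :=
  sInf {c : ℝ | ∃ x : Finset V → ℝ, (∀ e ∈ E, 0 ≤ x e) ∧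
    (s : ℝ) ≤ ∑ v : V, min 1 (∑ e ∈ E.filter (fun e => v ∈ e), x e) ∧
    c = ∑ e ∈ E, x e}

/-- `IntCover G s`: the infimum of `∑_{e ∈ E} x e` over all nonnegative `x` for which
there is an `S ⊆ V` with `|S| = s` such that `∑_{e ∋ v} x e ≥ 1` for all `v ∈ S`. -/
noncomputable def IntCover {V : Type*} [Fintype V] [DecidableEq V]
    (E : Finset (Finset V)) (s : ℕ) : ℝ :=
  sInf {c : ℝ | ∃ x : Finset V → ℝ, (∀ e ∈ E, 0 ≤ x e) ∧
    (∃ S : Finset V, S.card = s ∧ ∀ v ∈ S, 1 ≤ ∑ e ∈ E.filter (fun e => v ∈ e), x e) ∧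
    c = ∑ e ∈ E, x e}

/-!
Double a fractional cover `x` of cost `c`: every vertex that `x` covers by at least `1/2` becomes
fully covered. The other vertices have coverage `< 1/2` and total coverage at least the number
`r` of vertices still missing. Some edge meets at least `mass / c` of them, so choosing
edges greedily shrinks the deficit `2 · mass - covered` by the factor `1 - 1/(2c)` per
edge, and `⌈2 c log 2⌉` edges cover `r` more vertices. The result costs at most
`(2 + 2 log 2) c + O(1)`, and `2 + 2 log 2 < 3.39`.
-/

open Finset

lemma one_sub_pow_le_half {ε : ℝ} {n : ℕ} (hε : ε ≤ 1) (hn : Real.log 2 ≤ ε * n) :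
    (1 - ε) ^ n ≤ 1 / 2 :=
  calc (1 - ε) ^ n ≤ Real.exp (-ε) ^ n := by
        gcongr
        exact Real.one_sub_le_exp_neg ε
    _ = Real.exp (-(ε * n)) := by rw [← Real.exp_nat_mul]; ring_nf
    _ ≤ Real.exp (-Real.log 2) := by gcongr
    _ = 1 / 2 := by rw [Real.exp_neg, Real.exp_log two_pos, one_div]

lemma sum_min_one_le_card_add_sum {ι : Type*} [Fintype ι] (f : ι → ℝ) (a : ℝ) :
    ∑ i, min 1 (f i) ≤ #{i | a ≤ f i} + ∑ i with ¬ a ≤ f i, f i := by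
  rw [← sum_filter_add_sum_filter_not univ (fun i => a ≤ f i)]
  gcongr
  · simpa using sum_le_card_nsmul _ _ 1 fun i _ => min_le_left 1 (f i)
  · exact min_le_right _ _

lemma sum_two_mul_add_ite_mem {ι : Type*} [DecidableEq ι] (x : ι → ℝ) (G F : Finset ι) :
    ∑ e ∈ G, (2 * x e + if e ∈ F then 1 else 0) = 2 * ∑ e ∈ G, x e + #(G ∩ F) := by
  rw [sum_add_distrib, mul_sum, sum_boole, filter_mem_eq_inter]

namespace Hypergraph

variable {V : Type*} [DecidableEq V] {E : Finset (Finset V)} {x : Finset V → ℝ}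

def coverage (E : Finset (Finset V)) (x : Finset V → ℝ) (v : V) : ℝ :=
  ∑ e ∈ E with v ∈ e, x e

lemma coverage_nonneg (hx : ∀ e ∈ E, 0 ≤ x e) (v : V) : 0 ≤ coverage E x v :=
  sum_nonneg fun e he => hx e (mem_filter.mp he).1

lemma sum_coverage_eq (P : Finset V) :
    ∑ v ∈ P, coverage E x v = ∑ e ∈ E, #(P ∩ e) * x e := by
  simp only [coverage, sum_filter]
  rw [sum_comm]
  refine sum_congr rfl fun e _ => ?_
  rw [← sum_filter, filter_mem_eq_inter, sum_const, nsmul_eq_mul]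

lemma sum_coverage_le_card_inter_mul (hx : ∀ e ∈ E, 0 ≤ x e) {P e₀ : Finset V}
    (he₀ : ∀ e ∈ E, #(P ∩ e) ≤ #(P ∩ e₀)) :
    ∑ v ∈ P, coverage E x v ≤ #(P ∩ e₀) * ∑ e ∈ E, x e := by
  rw [sum_coverage_eq, mul_sum]
  exact sum_le_sum fun e he =>
    mul_le_mul_of_nonneg_right (by exact_mod_cast he₀ e he) (hx e he)

lemma card_inter_union (P e B : Finset V) : #(P ∩ (e ∪ B)) = #(P ∩ e) + #((P \ e) ∩ B) := by
  rw [← card_inter_add_card_sdiff (P ∩ (e ∪ B)) e]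
  congr 2 <;> ext v <;> simp only [mem_inter, mem_union, mem_sdiff] <;> tauto

theorem exists_greedy_cover (hx : ∀ e ∈ E, 0 ≤ x e) {c : ℝ} (hxc : ∑ e ∈ E, x e ≤ c)
    (hc : 1 / 2 ≤ c) (t : ℕ) (P : Finset V) (hP : ∀ v ∈ P, coverage E x v ≤ 1 / 2) :
    ∃ F ⊆ E, #F ≤ t ∧
      2 * (∑ v ∈ P, coverage E x v) * (1 - (1 - 1 / (2 * c)) ^ t) ≤
        #(P ∩ F.biUnion id) := by
  set q := 1 - 1 / (2 * c) with hq
  have hq0 : 0 ≤ q := by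
    rw [hq, sub_nonneg, div_le_one (by linarith)]; linarith
  have hq1 : q ≤ 1 := by rw [hq]; linarith [show 0 < 1 / (2 * c) by positivity]
  rcases E.eq_empty_or_nonempty with rfl | hE
  · exact ⟨∅, empty_subset _, by simp, by simp [coverage]⟩
  induction t generalizing P with
  | zero => exact ⟨∅, empty_subset _, by simp, by simp⟩
  | succ t ih =>
    obtain ⟨e₀, he₀E, he₀⟩ := exists_max_image E (fun e => #(P ∩ e)) hE
    obtain ⟨F, hFE, hFt, hF⟩ := ih (P \ e₀) fun v hv => hP v (mem_sdiff.mp hv).1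
    refine ⟨insert e₀ F, insert_subset he₀E hFE, (card_insert_le _ _).trans (by omega), ?_⟩
    set M := ∑ v ∈ P, coverage E x v
    set g : ℝ := (#(P ∩ e₀) : ℝ)
    have hMg : M ≤ g * c :=
      (sum_coverage_le_card_inter_mul hx he₀).trans (by gcongr)
    have hM' : M - g / 2 ≤ ∑ v ∈ P \ e₀, coverage E x v := by
      have hinter : ∑ v ∈ P ∩ e₀, coverage E x v ≤ g * (1 / 2) := by
        simpa using sum_le_card_nsmul _ _ _ fun v hv => hP v (mem_inter.mp hv).1
      linarith [sum_inter_add_sum_sdiff P e₀ (coverage E x)]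
    have hcovered : g + #((P \ e₀) ∩ F.biUnion id) = #(P ∩ (insert e₀ F).biUnion id) := by
      rw [biUnion_insert, card_inter_union]; push_cast; rfl
    have hgain : (1 - q) * (2 * M) ≤ g := by
      rw [hq, sub_sub_cancel, one_div_mul_eq_div, div_le_iff₀ (by linarith)]
      linarith
    have hqt1 : 0 ≤ 1 - q ^ t := sub_nonneg.mpr (pow_le_one₀ hq0 hq1)
    rw [← hcovered]
    calc 2 * M * (1 - q ^ (t + 1))
        = 2 * M * (1 - q ^ t) + q ^ t * ((1 - q) * (2 * M)) := by ring
      _ ≤ 2 * M * (1 - q ^ t) + q ^ t * g := by gcongr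
      _ = g + (2 * M - g) * (1 - q ^ t) := by ring
      _ ≤ g + 2 * (∑ v ∈ P \ e₀, coverage E x v) * (1 - q ^ t) := by gcongr; linarith
      _ ≤ g + #((P \ e₀) ∩ F.biUnion id) := by gcongr

theorem exists_cover_of_le_sum_min_coverage [Fintype V] (hx : ∀ e ∈ E, 0 ≤ x e) {s : ℕ}
    (hs : s ≤ ∑ v, min 1 (coverage E x v)) :
    ∃ z : Finset V → ℝ, (∀ e ∈ E, 0 ≤ z e) ∧
      (∃ S : Finset V, #S = s ∧ ∀ v ∈ S, 1 ≤ coverage E z v) ∧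
      ∑ e ∈ E, z e ≤
        2 * ∑ e ∈ E, x e + ⌈2 * Real.log 2 * max (∑ e ∈ E, x e) 1⌉₊ := by
  set c := max (∑ e ∈ E, x e) 1
  set t := ⌈2 * Real.log 2 * c⌉₊
  have hc : 1 ≤ c := le_max_right _ _
  set A : Finset V := {v | 1 / 2 ≤ coverage E x v}
  set P : Finset V := {v | ¬ 1 / 2 ≤ coverage E x v}
  obtain ⟨F, hFE, hFt, hF⟩ :=
    exists_greedy_cover hx (c := c) (le_max_left _ _) (by linarith) t P
      fun v hv => (not_le.mp (mem_filter.mp hv).2).le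
  have hdecay : (1 - 1 / (2 * c)) ^ t ≤ 1 / 2 := by
    refine one_sub_pow_le_half (by rw [div_le_one] <;> linarith) ?_
    calc Real.log 2 = 1 / (2 * c) * (2 * Real.log 2 * c) := by field_simp
      _ ≤ 1 / (2 * c) * t := by gcongr; exact Nat.le_ceil _
  have hmass : (s : ℝ) ≤ #A + ∑ v ∈ P, coverage E x v :=
    hs.trans (sum_min_one_le_card_add_sum _ _)
  have hAP : Disjoint A (P ∩ F.biUnion id) :=
    disjoint_filter_filter_not _ _ _ |>.mono_right inter_subset_left
  have hgreedy : ∑ v ∈ P, coverage E x v ≤ #(P ∩ F.biUnion id) := by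
    have := sum_nonneg fun v (_ : v ∈ P) => coverage_nonneg hx v
    nlinarith
  have hsC : s ≤ #(A ∪ (P ∩ F.biUnion id)) := by
    rw [card_union_of_disjoint hAP]
    exact_mod_cast (by linarith : (s : ℝ) ≤ #A + #(P ∩ F.biUnion id))
  obtain ⟨S, hSC, hS⟩ := exists_subset_card_eq hsC
  refine ⟨fun e => 2 * x e + if e ∈ F then 1 else 0,
    fun e he => add_nonneg (by linarith [hx e he]) (by split_ifs <;> norm_num),
    ⟨S, hS, ?_⟩, ?_⟩
  · intro v hv
    rw [coverage, sum_two_mul_add_ite_mem, ← coverage]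
    rcases mem_union.mp (hSC hv) with hvA | hvF
    · linarith [(mem_filter.mp hvA).2, (#({e ∈ E | v ∈ e} ∩ F)).cast_nonneg (α := ℝ)]
    · obtain ⟨f, hfF, hvf⟩ := mem_biUnion.mp (mem_inter.mp hvF).2
      have : 0 < #({e ∈ E | v ∈ e} ∩ F) :=
        card_pos.mpr ⟨f, mem_inter.mpr ⟨mem_filter.mpr ⟨hFE hfF, hvf⟩, hfF⟩⟩
      have : (1 : ℝ) ≤ #({e ∈ E | v ∈ e} ∩ F) := by exact_mod_cast this
      linarith [coverage_nonneg hx v]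
  · rw [sum_two_mul_add_ite_mem, inter_eq_right.mpr hFE]
    gcongr

theorem intCover_le_of_le_sum_min_coverage [Fintype V] (hx : ∀ e ∈ E, 0 ≤ x e) {s : ℕ}
    (hs : s ≤ ∑ v, min 1 (coverage E x v)) :
    IntCover E s ≤ 2 * ∑ e ∈ E, x e + ⌈2 * Real.log 2 * max (∑ e ∈ E, x e) 1⌉₊ := by
  obtain ⟨z, hz, hzS, hzx⟩ := exists_cover_of_le_sum_min_coverage hx hs
  refine le_trans (csInf_le ⟨0, ?_⟩ ?_) hzx
  · rintro _ ⟨y, hy, -, rfl⟩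
    exact sum_nonneg hy
  · exact ⟨z, hz, hzS, rfl⟩

lemma le_sum_min_coverage_one [Fintype V] {s : ℕ} (hs : s ≤ #(E.biUnion id)) :
    s ≤ ∑ v, min 1 (coverage E 1 v) := by
  calc (s : ℝ) ≤ ∑ v ∈ E.biUnion id, 1 := by simpa using hs
    _ ≤ ∑ v ∈ E.biUnion id, min 1 (coverage E 1 v) := by
        refine sum_le_sum fun v hv => le_min le_rfl ?_
        obtain ⟨e, he, hve⟩ := mem_biUnion.mp hv
        simpa [coverage] using card_pos.mpr ⟨e, mem_filter.mpr ⟨he, hve⟩⟩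
    _ ≤ ∑ v, min 1 (coverage E 1 v) :=
        sum_le_sum_of_subset_of_nonneg (subset_univ _) fun v _ _ =>
          le_min zero_le_one (coverage_nonneg (fun _ _ => zero_le_one) v)

end Hypergraph

/-- there is a universal constant `C > 0` such that for every hypergraph
and every `1 ≤ s ≤ |V|` with `|⋃ E| ≥ s`,
`IntCover(G, s) ≤ 3.73 · FracCover(G, s) + C · (1 + log s)`. -/
theorem intCover_le_fracCover_log : ∃ C : ℝ, 0 < C ∧
    ∀ (V : Type) [Fintype V] [DecidableEq V] (E : Finset (Finset V)) (s : ℕ),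
      1 ≤ s → s ≤ Fintype.card V → s ≤ (E.biUnion id).card →
      IntCover E s ≤ 3.73 * FracCover E s + C * (1 + Real.log s) := by
  refine ⟨4, by norm_num, fun V _ _ E s hs _ hsE => ?_⟩
  have hlog : 0 ≤ Real.log s := Real.log_nonneg (by exact_mod_cast hs)
  suffices h : (IntCover E s - 4 * (1 + Real.log s)) / 3.73 ≤ FracCover E s by
    rw [div_le_iff₀ (by norm_num)] at h
    linarith
  refine le_csInf
    ⟨_, 1, fun _ _ => zero_le_one, Hypergraph.le_sum_min_coverage_one hsE, rfl⟩ ?_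
  rintro _ ⟨x, hx, hfrac, rfl⟩
  have hint := Hypergraph.intCover_le_of_le_sum_min_coverage hx hfrac
  set c := ∑ e ∈ E, x e
  have hc : 0 ≤ c := sum_nonneg hx
  have hceil := Nat.ceil_lt_add_one (by positivity : 0 ≤ 2 * Real.log 2 * max c 1)
  have hmax : max c 1 ≤ c + 1 := max_le (by linarith) (by linarith)
  have hlog2 : 2 * Real.log 2 * max c 1 ≤ 1.3863 * (c + 1) := by
    nlinarith [Real.log_two_lt_d9, Real.log_nonneg one_le_two]
  rw [div_le_iff₀ (by norm_num)]
  linarith
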